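/- arXiv:1705.03804 — 3 statements merged into one kernel-verified Lean document; each statement's English description precedes it below -/
import Mathlib

section
/- For every integer n ≥ 1, the number of symplectic Dellac configurations of size 2n satisfies #SpDC_{2n} = Σ_{T ∈ Tab_n} 2^{fr(T)}, the sum ranging over all tableaux T in Tab_n. -/
/-!
A symplectic Dellac configuration is determined by its rows `1, …, 2n`, since `mirror` sends
them onto the remaining rows; in terms of these rows the column condition says that columns `j`
and `2n + 1 - j` together contain two dots. Folding column `j > n` onto `2n + 1 - j` turns such a
lower half into a tableau of `Tab_n`, and the condition `j ≤ i` on a dot of a folded column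
becomes freeness of its image. Conversely, the lower halves folding onto a tableau `T` are
obtained by unfolding an arbitrary subset of the free dots of `T`, so there are `2 ^ fr T` of them.
-/

/-- A Dellac configuration of size `m`. -/
def IsDellac (m : ℕ) (D : Finset (ℕ × ℕ)) : Prop :=
  (∀ d ∈ D, 1 ≤ d.1 ∧ d.1 ≤ m ∧ 1 ≤ d.2 ∧ d.2 ≤ 2 * m) ∧
  (∀ i, 1 ≤ i → i ≤ 2 * m → (D.filter (fun d => d.2 = i)).card = 1) ∧
  (∀ j, 1 ≤ j → j ≤ m → (D.filter (fun d => d.1 = j)).card = 2) ∧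
  (∀ d ∈ D, d.1 ≤ d.2 ∧ d.2 ≤ d.1 + m)

/-- A symplectic Dellac configuration of size `2n`. -/
def IsSpDC (n : ℕ) (S : Finset (ℕ × ℕ)) : Prop :=
  IsDellac (2 * n) S ∧
  ∀ j i, 1 ≤ j → j ≤ 2 * n → 1 ≤ i → i ≤ 4 * n →
    ((j, i) ∈ S ↔ (2 * n + 1 - j, 4 * n + 1 - i) ∈ S)

/-- The set of symplectic Dellac configurations of size `2n`. -/
def SpDC (n : ℕ) : Set (Finset (ℕ × ℕ)) := {S | IsSpDC n S}

/-- A tableau in `Tab_n`: `2n` dots `(j, p)` with `j ∈ [1, n]`, `p ∈ [1, 2n]`,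
each row containing exactly one dot, each column exactly two dots, and each dot
satisfying `j ≤ p`. -/
def IsTab (n : ℕ) (T : Finset (ℕ × ℕ)) : Prop :=
  (∀ d ∈ T, 1 ≤ d.1 ∧ d.1 ≤ n ∧ 1 ≤ d.2 ∧ d.2 ≤ 2 * n) ∧
  (∀ i, 1 ≤ i → i ≤ 2 * n → (T.filter (fun d => d.2 = i)).card = 1) ∧
  (∀ j, 1 ≤ j → j ≤ n → (T.filter (fun d => d.1 = j)).card = 2) ∧
  (∀ d ∈ T, d.1 ≤ d.2)

/-- The set `Tab_n`. -/
def Tab (n : ℕ) : Set (Finset (ℕ × ℕ)) := {T | IsTab n T}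

/-- The number of free dots of `T`, i.e. dots `(j, p)` with `p ≥ 2n + 1 - j`. -/
def fr (n : ℕ) (T : Finset (ℕ × ℕ)) : ℕ :=
  (T.filter (fun d => 2 * n + 1 ≤ d.1 + d.2)).card


open Finset

lemma mem_filter_powerset_iff {α : Type*} {B : Finset α} {P : Finset α → Prop}
    [DecidablePred P] (h : ∀ S, P S → S ⊆ B) {S : Finset α} :
    S ∈ {S ∈ B.powerset | P S} ↔ P S := by
  simp only [mem_filter, mem_powerset, and_iff_right_iff_imp]
  exact h S

lemma injOn_snd_of_card_filter_snd_eq_one {α β : Type*} [DecidableEq β] {s : Finset (α × β)}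
    (h : ∀ d ∈ s, #{e ∈ s | e.2 = d.2} = 1) : Set.InjOn Prod.snd (s : Set (α × β)) :=
  fun a ha b hb hab =>
    card_le_one.1 (h a ha).le a (mem_filter.2 ⟨ha, rfl⟩) b (mem_filter.2 ⟨hb, hab.symm⟩)

section RowPreserving

variable {α β : Type*} {f : α × β → α × β}

lemma Set.InjOn.of_snd_comp {s : Set (α × β)} (hf : ∀ d, (f d).2 = d.2)
    (hs : Set.InjOn Prod.snd s) : Set.InjOn f s :=
  Set.InjOn.of_comp (g := Prod.snd) fun a ha b hb hab => hs ha hb (by simpa [hf] using hab)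

lemma card_filter_snd_image_eq_one [DecidableEq α] [DecidableEq β] (hf : ∀ d, (f d).2 = d.2)
    {s : Finset (α × β)} {i : β} (h : #{d ∈ s | d.2 = i} = 1) :
    #{d ∈ s.image f | d.2 = i} = 1 := by
  obtain ⟨d, hd⟩ := card_eq_one.1 h
  simp only [filter_image, hf, hd, image_singleton, card_singleton]

end RowPreserving

/-- The central symmetry of the board `[1, 2n] × [1, 4n]`. -/
def mirror (n : ℕ) (d : ℕ × ℕ) : ℕ × ℕ := (2 * n + 1 - d.1, 4 * n + 1 - d.2)

lemma mirror_mirror {n : ℕ} {d : ℕ × ℕ} (h1 : d.1 ≤ 2 * n + 1) (h2 : d.2 ≤ 4 * n + 1) :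
    mirror n (mirror n d) = d := by
  simp only [mirror, Prod.ext_iff]
  omega

/-- The rows `1, …, 2n` of a symplectic Dellac configuration, which determine the others. -/
def IsLowerHalf (n : ℕ) (H : Finset (ℕ × ℕ)) : Prop :=
  (∀ d ∈ H, 1 ≤ d.1 ∧ d.1 ≤ d.2 ∧ d.2 ≤ 2 * n) ∧
  (∀ i, 1 ≤ i → i ≤ 2 * n → #{d ∈ H | d.2 = i} = 1) ∧
  (∀ j, 1 ≤ j → j ≤ n → #{d ∈ H | d.1 = j} + #{d ∈ H | d.1 = 2 * n + 1 - j} = 2)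

open Classical in
noncomputable def spdcFinset (n : ℕ) : Finset (Finset (ℕ × ℕ)) :=
  {S ∈ (Icc 1 (2 * n) ×ˢ Icc 1 (4 * n)).powerset | IsSpDC n S}

open Classical in
noncomputable def lowerHalfFinset (n : ℕ) : Finset (Finset (ℕ × ℕ)) :=
  {H ∈ (Icc 1 (2 * n) ×ˢ Icc 1 (2 * n)).powerset | IsLowerHalf n H}

open Classical in
noncomputable def tabFinset (n : ℕ) : Finset (Finset (ℕ × ℕ)) :=
  {T ∈ (Icc 1 n ×ˢ Icc 1 (2 * n)).powerset | IsTab n T}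

lemma mem_spdcFinset {n : ℕ} {S : Finset (ℕ × ℕ)} : S ∈ spdcFinset n ↔ IsSpDC n S := by
  classical
  refine mem_filter_powerset_iff fun S hS d hd => ?_
  have := hS.1.1 d hd
  simp only [mem_product, mem_Icc]
  omega

lemma mem_lowerHalfFinset {n : ℕ} {H : Finset (ℕ × ℕ)} :
    H ∈ lowerHalfFinset n ↔ IsLowerHalf n H := by
  classical
  refine mem_filter_powerset_iff fun H hH d hd => ?_
  have := hH.1 d hd
  simp only [mem_product, mem_Icc]
  omega

lemma mem_tabFinset {n : ℕ} {T : Finset (ℕ × ℕ)} : T ∈ tabFinset n ↔ IsTab n T := by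
  classical
  refine mem_filter_powerset_iff fun T hT d hd => ?_
  have := hT.1 d hd
  simp only [mem_product, mem_Icc]
  omega

lemma coe_spdcFinset (n : ℕ) : ↑(spdcFinset n) = SpDC n :=
  Set.ext fun _ => mem_spdcFinset

lemma coe_tabFinset (n : ℕ) : ↑(tabFinset n) = Tab n :=
  Set.ext fun _ => mem_tabFinset

namespace IsSpDC

variable {n : ℕ} {S : Finset (ℕ × ℕ)}

lemma mirror_mem (hS : IsSpDC n S) {d : ℕ × ℕ} (hd : d ∈ S) : mirror n d ∈ S := by
  have := hS.1.1 d hd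
  exact (hS.2 d.1 d.2 (by omega) (by omega) (by omega) (by omega)).1 hd

lemma card_filter_mirror (hS : IsSpDC n S) (p : ℕ × ℕ → Prop) [DecidablePred p] :
    #{d ∈ S | p (mirror n d)} = #{d ∈ S | p d} := by
  have hinv : ∀ d ∈ S, mirror n (mirror n d) = d := fun d hd => by
    have := hS.1.1 d hd
    exact mirror_mirror (by omega) (by omega)
  refine card_nbij' (mirror n) (mirror n) ?_ ?_ ?_ ?_
  · intro d hd
    simp only [mem_coe, mem_filter] at hd ⊢
    exact ⟨hS.mirror_mem hd.1, hd.2⟩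
  · intro d hd
    simp only [mem_coe, mem_filter] at hd ⊢
    exact ⟨hS.mirror_mem hd.1, by rw [hinv d hd.1]; exact hd.2⟩
  · exact fun d hd => hinv d (mem_filter.1 hd).1
  · exact fun d hd => hinv d (mem_filter.1 hd).1

lemma isLowerHalf (hS : IsSpDC n S) : IsLowerHalf n {d ∈ S | d.2 ≤ 2 * n} := by
  have ⟨⟨hb, hrow, hcol, hdiag⟩, _⟩ := hS
  refine ⟨fun d hd => ?_, fun i hi1 hi2 => ?_, fun j hj1 hj2 => ?_⟩
  · rw [mem_filter] at hd
    have := hb d hd.1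
    have := hdiag d hd.1
    omega
  · rw [filter_filter, filter_congr fun d _ => show d.2 ≤ 2 * n ∧ d.2 = i ↔ d.2 = i by omega]
    exact hrow i hi1 (by omega)
  · have hlower :
        {d ∈ S | d.2 ≤ 2 * n ∧ d.1 = j} = {d ∈ {d ∈ S | d.1 = j} | d.2 ≤ 2 * n} := by
      rw [filter_filter]
      exact filter_congr fun _ _ => and_comm
    have hupper : #{d ∈ S | d.2 ≤ 2 * n ∧ d.1 = 2 * n + 1 - j} =
        #{d ∈ {d ∈ S | d.1 = j} | ¬d.2 ≤ 2 * n} := by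
      rw [← hS.card_filter_mirror, filter_filter]
      congr 1
      refine filter_congr fun d hd => ?_
      have := hb d hd
      simp only [mirror]
      omega
    rw [filter_filter, filter_filter, hlower, hupper, card_filter_add_card_filter_not]
    exact hcol j hj1 (by omega)

lemma eq_union_image_mirror (hS : IsSpDC n S) :
    S = {d ∈ S | d.2 ≤ 2 * n} ∪ {d ∈ S | d.2 ≤ 2 * n}.image (mirror n) := by
  ext d
  simp only [mem_union, mem_filter, mem_image]
  constructor
  · intro hd
    have := hS.1.1 d hd
    by_cases hlow : d.2 ≤ 2 * n
    · exact .inl ⟨hd, hlow⟩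
    · refine .inr ⟨mirror n d, ⟨hS.mirror_mem hd, ?_⟩, mirror_mirror (by omega) (by omega)⟩
      simp only [mirror]
      omega
  · rintro (⟨hd, -⟩ | ⟨e, ⟨he, -⟩, rfl⟩)
    exacts [hd, hS.mirror_mem he]

end IsSpDC

namespace IsLowerHalf

variable {n : ℕ} {H : Finset (ℕ × ℕ)}

lemma card_filter_snd_eq_zero (hH : IsLowerHalf n H) {i : ℕ} (hi : 2 * n < i) :
    #{d ∈ H | d.2 = i} = 0 := by
  refine card_eq_zero.2 (filter_false_of_mem fun d hd => ?_)
  have := hH.1 d hd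
  omega

lemma card_filter_union_image_mirror (hH : IsLowerHalf n H) (p : ℕ × ℕ → Prop)
    [DecidablePred p] :
    #{d ∈ H ∪ H.image (mirror n) | p d} = #{d ∈ H | p d} + #{d ∈ H | p (mirror n d)} := by
  have hinj : Set.InjOn (mirror n) H := Set.LeftInvOn.injOn (f₁' := mirror n) fun d hd => by
    have := hH.1 d hd
    exact mirror_mirror (by omega) (by omega)
  have hdisj : Disjoint H (H.image (mirror n)) := by
    refine disjoint_left.2 fun d hd hd' => ?_
    obtain ⟨e, he, rfl⟩ := mem_image.1 hd'
    have := hH.1 _ hd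
    have := hH.1 e he
    simp only [mirror] at *
    omega
  rw [filter_union, card_union_of_disjoint (disjoint_filter_filter hdisj), filter_image,
    card_image_of_injOn (hinj.mono (filter_subset _ _))]

lemma mirror_mem_union_image_mirror (hH : IsLowerHalf n H) {d : ℕ × ℕ}
    (hd : d ∈ H ∪ H.image (mirror n)) : mirror n d ∈ H ∪ H.image (mirror n) := by
  rcases mem_union.1 hd with hd | hd
  · exact mem_union_right _ (mem_image_of_mem _ hd)
  · obtain ⟨e, he, rfl⟩ := mem_image.1 hd
    have := hH.1 e he
    rw [mirror_mirror (by omega) (by omega)]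
    exact mem_union_left _ he

lemma isSpDC_union_image_mirror (hH : IsLowerHalf n H) : IsSpDC n (H ∪ H.image (mirror n)) := by
  have ⟨hb, hrow, hpair⟩ := hH
  refine ⟨⟨fun d hd => ?_, fun i hi1 hi2 => ?_, fun j hj1 hj2 => ?_, fun d hd => ?_⟩,
    fun j i hj1 hj2 hi1 hi2 => ⟨hH.mirror_mem_union_image_mirror, fun h => ?_⟩⟩
  · rcases mem_union.1 hd with hd | hd
    · have := hb d hd
      omega
    · obtain ⟨e, he, rfl⟩ := mem_image.1 hd
      have := hb e he
      simp only [mirror]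
      omega
  · have hmirror : {d ∈ H | (mirror n d).2 = i} = {d ∈ H | d.2 = 4 * n + 1 - i} :=
      filter_congr fun d hd => by
        have := hb d hd
        simp only [mirror]
        omega
    rw [hH.card_filter_union_image_mirror, hmirror]
    rcases le_or_gt i (2 * n) with hi | hi
    · rw [hrow i hi1 hi, hH.card_filter_snd_eq_zero (by omega)]
    · rw [hH.card_filter_snd_eq_zero hi, hrow (4 * n + 1 - i) (by omega) (by omega)]
  · have hmirror : {d ∈ H | (mirror n d).1 = j} = {d ∈ H | d.1 = 2 * n + 1 - j} :=
      filter_congr fun d hd => by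
        have := hb d hd
        simp only [mirror]
        omega
    rw [hH.card_filter_union_image_mirror, hmirror]
    rcases le_or_gt j n with hj | hj
    · exact hpair j hj1 hj
    · have := hpair (2 * n + 1 - j) (by omega) (by omega)
      rwa [Nat.sub_sub_self (by omega), add_comm] at this
  · rcases mem_union.1 hd with hd | hd
    · have := hb d hd
      omega
    · obtain ⟨e, he, rfl⟩ := mem_image.1 hd
      have := hb e he
      simp only [mirror]
      omega
  · have := hH.mirror_mem_union_image_mirror (d := mirror n (j, i)) h
    rwa [mirror_mirror (by dsimp; omega) (by dsimp; omega)] at this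

lemma filter_union_image_mirror (hH : IsLowerHalf n H) :
    {d ∈ H ∪ H.image (mirror n) | d.2 ≤ 2 * n} = H := by
  ext d
  simp only [mem_filter, mem_union, mem_image]
  constructor
  · rintro ⟨hd | ⟨e, he, rfl⟩, hlow⟩
    · exact hd
    · have := hH.1 e he
      simp only [mirror] at hlow
      omega
  · intro hd
    exact ⟨.inl hd, (hH.1 d hd).2.2⟩

end IsLowerHalf

lemma card_spdcFinset (n : ℕ) : #(spdcFinset n) = #(lowerHalfFinset n) := by
  refine card_nbij' (fun S => {d ∈ S | d.2 ≤ 2 * n}) (fun H => H ∪ H.image (mirror n))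
    (fun S hS => ?_) (fun H hH => ?_) (fun S hS => ?_) (fun H hH => ?_)
  · exact mem_lowerHalfFinset.2 (mem_spdcFinset.1 hS).isLowerHalf
  · exact mem_spdcFinset.2 (mem_lowerHalfFinset.1 hH).isSpDC_union_image_mirror
  · exact (mem_spdcFinset.1 hS).eq_union_image_mirror.symm
  · exact (mem_lowerHalfFinset.1 hH).filter_union_image_mirror

def freeDots (n : ℕ) (T : Finset (ℕ × ℕ)) : Finset (ℕ × ℕ) :=
  {d ∈ T | 2 * n + 1 ≤ d.1 + d.2}

lemma fr_eq_card_freeDots (n : ℕ) (T : Finset (ℕ × ℕ)) : fr n T = #(freeDots n T) := rfl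

def flipCol (n : ℕ) (d : ℕ × ℕ) : ℕ × ℕ := (2 * n + 1 - d.1, d.2)

def foldCol (n : ℕ) (d : ℕ × ℕ) : ℕ × ℕ := (min d.1 (2 * n + 1 - d.1), d.2)

def flipColOn (n : ℕ) (A : Finset (ℕ × ℕ)) (d : ℕ × ℕ) : ℕ × ℕ :=
  if d ∈ A then flipCol n d else d

/-- The free dots of the folded tableau that come from columns `> n`. -/
def unfoldedDots (n : ℕ) (H : Finset (ℕ × ℕ)) : Finset (ℕ × ℕ) :=
  {d ∈ H | n < d.1}.image (flipCol n)

lemma foldCol_snd (n : ℕ) (d : ℕ × ℕ) : (foldCol n d).2 = d.2 := rfl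

lemma flipColOn_snd (n : ℕ) (A : Finset (ℕ × ℕ)) (d : ℕ × ℕ) :
    (flipColOn n A d).2 = d.2 := by
  unfold flipColOn
  split_ifs <;> rfl

lemma card_filter_fst_image_foldCol {n j : ℕ} {H : Finset (ℕ × ℕ)}
    (hb : ∀ d ∈ H, 1 ≤ d.1 ∧ d.1 ≤ 2 * n)
    (hrow : Set.InjOn Prod.snd (H : Set (ℕ × ℕ)))
    (hj : j ≤ n) :
    #{d ∈ H.image (foldCol n) | d.1 = j} =
      #{d ∈ H | d.1 = j} + #{d ∈ H | d.1 = 2 * n + 1 - j} := by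
  have hdisj : Disjoint {d ∈ H | d.1 = j} {d ∈ H | d.1 = 2 * n + 1 - j} :=
    disjoint_filter_filter' _ _ fun _ h₁ h₂ d hd => by
      have := h₁ d hd
      have := h₂ d hd
      omega
  have hinj := (hrow.of_snd_comp (foldCol_snd n)).mono
    (filter_subset (fun d => (foldCol n d).1 = j) H)
  rw [filter_image, card_image_of_injOn hinj, ← card_union_of_disjoint hdisj, ← filter_or]
  congr 1
  refine filter_congr fun d hd => ?_
  have := hb d hd
  simp only [foldCol]
  omega

namespace IsLowerHalf

variable {n : ℕ} {H : Finset (ℕ × ℕ)}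

lemma injOn_snd (hH : IsLowerHalf n H) : Set.InjOn Prod.snd (H : Set (ℕ × ℕ)) :=
  injOn_snd_of_card_filter_snd_eq_one fun d hd => by
    have := hH.1 d hd
    exact hH.2.1 d.2 (by omega) (by omega)

lemma isTab_image_foldCol (hH : IsLowerHalf n H) : IsTab n (H.image (foldCol n)) := by
  have ⟨hb, hrow, hpair⟩ := hH
  refine ⟨fun d hd => ?_, fun i hi1 hi2 => ?_, fun j hj1 hj2 => ?_, fun d hd => ?_⟩
  · obtain ⟨e, he, rfl⟩ := mem_image.1 hd
    have := hb e he
    simp only [foldCol]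
    omega
  · exact card_filter_snd_image_eq_one (foldCol_snd n) (hrow i hi1 hi2)
  · rw [card_filter_fst_image_foldCol (fun d hd => by have := hb d hd; omega) hH.injOn_snd hj2]
    exact hpair j hj1 hj2
  · obtain ⟨e, he, rfl⟩ := mem_image.1 hd
    have := hb e he
    simp only [foldCol]
    omega

lemma flipColOn_unfoldedDots_foldCol (hH : IsLowerHalf n H) {d : ℕ × ℕ} (hd : d ∈ H) :
    flipColOn n (unfoldedDots n H) (foldCol n d) = d := by
  have := hH.1 d hd
  by_cases hlow : d.1 ≤ n
  · have hfold : foldCol n d = d := Prod.ext (by simp only [foldCol]; omega) rfl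
    have hnot : d ∉ unfoldedDots n H := by
      simp only [unfoldedDots, mem_image, mem_filter, not_exists, not_and]
      rintro e ⟨he, hne⟩ hflip
      have hed : e = d := hH.injOn_snd he hd (congrArg Prod.snd hflip : (flipCol n e).2 = d.2)
      subst hed
      simp only [flipCol, Prod.ext_iff] at hflip
      omega
    rw [hfold, flipColOn, if_neg hnot]
  · have hfold : foldCol n d = flipCol n d := Prod.ext (by simp only [foldCol, flipCol]; omega) rfl
    have hmem : flipCol n d ∈ unfoldedDots n H :=
      mem_image_of_mem _ (mem_filter.2 ⟨hd, by omega⟩)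
    rw [hfold, flipColOn, if_pos hmem]
    exact Prod.ext (by simp only [flipCol]; omega) rfl

lemma image_flipColOn_unfoldedDots (hH : IsLowerHalf n H) :
    (H.image (foldCol n)).image (flipColOn n (unfoldedDots n H)) = H := by
  rw [image_image]
  exact (image_congr fun d hd => hH.flipColOn_unfoldedDots_foldCol hd).trans image_id'

lemma unfoldedDots_subset (hH : IsLowerHalf n H) :
    unfoldedDots n H ⊆ freeDots n (H.image (foldCol n)) := by
  intro d hd
  obtain ⟨e, he, rfl⟩ := mem_image.1 hd
  rw [mem_filter] at he
  have := hH.1 e he.1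
  refine mem_filter.2 ⟨mem_image.2 ⟨e, he.1, Prod.ext ?_ rfl⟩, ?_⟩
  all_goals simp only [foldCol, flipCol]; omega

end IsLowerHalf

namespace IsTab

variable {n : ℕ} {T A : Finset (ℕ × ℕ)}

lemma injOn_snd (hT : IsTab n T) : Set.InjOn Prod.snd (T : Set (ℕ × ℕ)) :=
  injOn_snd_of_card_filter_snd_eq_one fun d hd => by
    have := hT.1 d hd
    exact hT.2.1 d.2 (by omega) (by omega)

lemma foldCol_flipColOn (hT : IsTab n T) {d : ℕ × ℕ} (hd : d ∈ T) :
    foldCol n (flipColOn n A d) = d := by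
  have := hT.1 d hd
  unfold flipColOn
  split_ifs
  all_goals exact Prod.ext (by simp only [foldCol, flipCol]; omega) rfl

lemma image_foldCol_image_flipColOn (hT : IsTab n T) :
    (T.image (flipColOn n A)).image (foldCol n) = T := by
  rw [image_image]
  exact (image_congr fun d hd => hT.foldCol_flipColOn hd).trans image_id'

lemma isLowerHalf_image_flipColOn (hT : IsTab n T) (hA : A ⊆ freeDots n T) :
    IsLowerHalf n (T.image (flipColOn n A)) := by
  have hb : ∀ d ∈ T.image (flipColOn n A), 1 ≤ d.1 ∧ d.1 ≤ d.2 ∧ d.2 ≤ 2 * n := by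
    intro d hd
    obtain ⟨e, he, rfl⟩ := mem_image.1 hd
    have := hT.1 e he
    have := hT.2.2.2 e he
    by_cases heA : e ∈ A
    · have := (mem_filter.1 (hA heA)).2
      simp only [flipColOn, if_pos heA, flipCol]
      omega
    · simp only [flipColOn, if_neg heA]
      omega
  refine ⟨hb, fun i hi1 hi2 => ?_, fun j hj1 hj2 => ?_⟩
  · exact card_filter_snd_image_eq_one (flipColOn_snd n A) (hT.2.1 i hi1 hi2)
  · have hrow : Set.InjOn Prod.snd (T.image (flipColOn n A) : Set (ℕ × ℕ)) := by
      rw [coe_image]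
      exact Set.InjOn.image_of_comp (hT.injOn_snd.congr fun d _ => (flipColOn_snd n A d).symm)
    rw [← card_filter_fst_image_foldCol (fun d hd => by have := hb d hd; omega) hrow hj2,
      hT.image_foldCol_image_flipColOn]
    exact hT.2.2.1 j hj1 hj2

lemma unfoldedDots_image_flipColOn (hT : IsTab n T) (hA : A ⊆ freeDots n T) :
    unfoldedDots n (T.image (flipColOn n A)) = A := by
  have hfilter : {d ∈ T | n < (flipColOn n A d).1} = A := by
    ext d
    rw [mem_filter]
    by_cases hdA : d ∈ A
    · have hdT := (mem_filter.1 (hA hdA)).1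
      have := hT.1 d hdT
      simp only [flipColOn, hdA, ↓reduceIte, flipCol, hdT, true_and, iff_true]
      omega
    · simp only [flipColOn, hdA, ↓reduceIte, iff_false, not_and, not_lt]
      exact fun hdT => (hT.1 d hdT).2.1
  rw [unfoldedDots, filter_image, hfilter, image_image]
  refine (image_congr fun d hd => ?_).trans image_id'
  have := hT.1 d (mem_filter.1 (hA hd)).1
  simp only [Function.comp, flipColOn, if_pos (mem_coe.1 hd)]
  exact Prod.ext (by simp only [flipCol]; omega) rfl

lemma card_filter_image_foldCol_eq (hT : IsTab n T) :
    #{H ∈ lowerHalfFinset n | H.image (foldCol n) = T} = 2 ^ fr n T := by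
  rw [fr_eq_card_freeDots, ← card_powerset]
  refine card_nbij' (unfoldedDots n) (fun A => T.image (flipColOn n A))
    (fun H hH => ?_) (fun A hA => ?_) (fun H hH => ?_) (fun A hA => ?_)
  · rw [mem_coe, mem_filter] at hH
    rw [mem_coe, mem_powerset, ← hH.2]
    exact (mem_lowerHalfFinset.1 hH.1).unfoldedDots_subset
  · rw [mem_coe, mem_powerset] at hA
    exact mem_filter.2 ⟨mem_lowerHalfFinset.2 (hT.isLowerHalf_image_flipColOn hA),
      hT.image_foldCol_image_flipColOn⟩
  · rw [mem_coe, mem_filter] at hH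
    rw [← hH.2]
    exact (mem_lowerHalfFinset.1 hH.1).image_flipColOn_unfoldedDots
  · rw [mem_coe, mem_powerset] at hA
    exact hT.unfoldedDots_image_flipColOn hA

end IsTab

lemma card_lowerHalfFinset (n : ℕ) :
    #(lowerHalfFinset n) = ∑ T ∈ tabFinset n, 2 ^ fr n T := by
  rw [card_eq_sum_card_fiberwise fun H hH =>
    mem_tabFinset.2 (mem_lowerHalfFinset.1 hH).isTab_image_foldCol]
  exact sum_congr rfl fun T hT => (mem_tabFinset.1 hT).card_filter_image_foldCol_eq

theorem spdc_card_eq_sum_tab_general (n : ℕ) :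
    (SpDC n).ncard = ∑ᶠ T ∈ Tab n, 2 ^ fr n T := by
  rw [← coe_spdcFinset, ← coe_tabFinset, Set.ncard_coe_finset, finsum_mem_coe_finset,
    card_spdcFinset, card_lowerHalfFinset]

/-- For every `n ≥ 1`, `#SpDC_{2n} = Σ_{T ∈ Tab_n} 2^{fr(T)}`. -/
theorem spdc_card_eq_sum_tab (n : ℕ) (hn : 1 ≤ n) :
    (SpDC n).ncard = ∑ᶠ T ∈ Tab n, 2 ^ fr n T :=
  spdc_card_eq_sum_tab_general n
end

section
/- For every integer n ≥ 1, the cardinality of Tab_n equals (n+1)!·n!/2^n; equivalently, 2^n · #Tab_n = (n+1)! · n!. -/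
/-- Row relabeling: order iso from `[1,2m]` onto `[1,2m+2] \ {r1,r2}`. -/
def ePair (r1 r2 p : ℕ) : ℕ := if p < r1 then p else if p + 1 < r2 then p + 1 else p + 2

/-- Inverse relabeling. -/
def eInv (r1 r2 q : ℕ) : ℕ := if q < r1 then q else if q < r2 then q - 1 else q - 2

def fMap (r1 r2 : ℕ) (d : ℕ × ℕ) : ℕ × ℕ := (d.1, ePair r1 r2 d.2)

/-- Insert a new top column with dots in rows `r1 < r2`. -/
def insMap (n r1 r2 : ℕ) (T' : Finset (ℕ × ℕ)) : Finset (ℕ × ℕ) :=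
  insert (n, r1) (insert (n, r2) (T'.image (fMap r1 r2)))

lemma ePair_inj {r1 r2 : ℕ} (h : r1 < r2) : Function.Injective (ePair r1 r2) := by
  intro p q hpq
  unfold ePair at hpq
  split_ifs at hpq <;> omega

lemma ePair_ne {r1 r2 : ℕ} (h : r1 < r2) (p : ℕ) :
    ePair r1 r2 p ≠ r1 ∧ ePair r1 r2 p ≠ r2 := by
  unfold ePair; split_ifs <;> omega

lemma ePair_ge (r1 r2 p : ℕ) : p ≤ ePair r1 r2 p := by
  unfold ePair; split_ifs <;> omega

lemma ePair_le (r1 r2 p : ℕ) : ePair r1 r2 p ≤ p + 2 := by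
  unfold ePair; split_ifs <;> omega

lemma ePair_eInv {r1 r2 q : ℕ} (h : r1 < r2) (h1 : q ≠ r1) (h2 : q ≠ r2) :
    ePair r1 r2 (eInv r1 r2 q) = q := by
  unfold ePair eInv; split_ifs <;> omega

lemma fMap_inj {r1 r2 : ℕ} (h : r1 < r2) : Function.Injective (fMap r1 r2) := by
  intro d d' hd
  have h1 := congrArg Prod.fst hd
  have h2 := congrArg Prod.snd hd
  simp only [fMap] at h1 h2
  exact Prod.ext h1 (ePair_inj h h2)

lemma mem_insMap {n r1 r2 : ℕ} {T' : Finset (ℕ × ℕ)} {d : ℕ × ℕ} :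
    d ∈ insMap n r1 r2 T' ↔ d = (n, r1) ∨ d = (n, r2) ∨ ∃ d' ∈ T', fMap r1 r2 d' = d := by
  simp [insMap, Finset.mem_insert, Finset.mem_image]

lemma filter_insMap_row {n r1 r2 : ℕ} (h : r1 < r2) (T' : Finset (ℕ × ℕ)) {i : ℕ}
    (hi1 : i ≠ r1) (hi2 : i ≠ r2) :
    (insMap n r1 r2 T').filter (fun d => d.2 = i) =
      (T'.filter (fun d => ePair r1 r2 d.2 = i)).image (fMap r1 r2) := by
  unfold insMap
  rw [Finset.filter_insert, Finset.filter_insert, Finset.filter_image]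
  simp only [if_neg (by simpa using (Ne.symm hi1)), if_neg (by simpa using (Ne.symm hi2))]
  rfl

lemma filter_insMap_col {n r1 r2 : ℕ} (T' : Finset (ℕ × ℕ)) {j : ℕ} (hj : j ≠ n) :
    (insMap n r1 r2 T').filter (fun d => d.1 = j) =
      (T'.filter (fun d => d.1 = j)).image (fMap r1 r2) := by
  unfold insMap
  rw [Finset.filter_insert, Finset.filter_insert, Finset.filter_image]
  simp only [if_neg (by simpa using (Ne.symm hj))]
  rfl


lemma filter_insMap_row_self₁ {n r1 r2 : ℕ} (h12 : r1 < r2) (T' : Finset (ℕ × ℕ)) :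
    (insMap n r1 r2 T').filter (fun d => d.2 = r1) = {(n, r1)} := by
  ext d
  simp only [Finset.mem_filter, mem_insMap, Finset.mem_singleton]
  constructor
  · rintro ⟨rfl | rfl | ⟨d', _, rfl⟩, hd2⟩
    · rfl
    · simp at hd2; omega
    · exact absurd hd2 ((ePair_ne h12 d'.2).1)
  · rintro rfl
    exact ⟨Or.inl rfl, rfl⟩

lemma filter_insMap_row_self₂ {n r1 r2 : ℕ} (h12 : r1 < r2) (T' : Finset (ℕ × ℕ)) :
    (insMap n r1 r2 T').filter (fun d => d.2 = r2) = {(n, r2)} := by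
  ext d
  simp only [Finset.mem_filter, mem_insMap, Finset.mem_singleton]
  constructor
  · rintro ⟨rfl | rfl | ⟨d', _, rfl⟩, hd2⟩
    · simp at hd2; omega
    · rfl
    · exact absurd hd2 ((ePair_ne h12 d'.2).2)
  · rintro rfl
    exact ⟨Or.inr (Or.inl rfl), rfl⟩

lemma filter_insMap_col_self {n r1 r2 : ℕ} (T' : Finset (ℕ × ℕ))
    (hb : ∀ d ∈ T', d.1 ≠ n) :
    (insMap n r1 r2 T').filter (fun d => d.1 = n) = {(n, r1), (n, r2)} := by
  ext d
  simp only [Finset.mem_filter, mem_insMap, Finset.mem_insert, Finset.mem_singleton]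
  constructor
  · rintro ⟨rfl | rfl | ⟨d', hd', rfl⟩, hd1⟩
    · exact Or.inl rfl
    · exact Or.inr rfl
    · exact absurd hd1 (hb d' hd')
  · rintro (rfl | rfl)
    · exact ⟨Or.inl rfl, rfl⟩
    · exact ⟨Or.inr (Or.inl rfl), rfl⟩

lemma insMap_mem {m r1 r2 : ℕ} (h1 : m + 1 ≤ r1) (h12 : r1 < r2) (h2 : r2 ≤ 2 * (m + 1))
    {T' : Finset (ℕ × ℕ)} (hT' : IsTab m T') : IsTab (m + 1) (insMap (m + 1) r1 r2 T') := by
  obtain ⟨hb, hrow, hcol, hle⟩ := hT'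
  refine ⟨?_, ?_, ?_, ?_⟩
  · intro d hd
    rcases mem_insMap.1 hd with rfl | rfl | ⟨d', hd', rfl⟩
    · simp; omega
    · simp; omega
    · obtain ⟨b1, b2, b3, b4⟩ := hb d' hd'
      have := ePair_ge r1 r2 d'.2
      have := ePair_le r1 r2 d'.2
      exact ⟨b1, by simpa [fMap] using ⟨by omega, by omega, by omega⟩⟩
  · intro i hi1 hi2
    by_cases hir1 : i = r1
    · subst hir1
      rw [filter_insMap_row_self₁ h12]
      simp
    by_cases hir2 : i = r2
    · subst hir2
      rw [filter_insMap_row_self₂ h12]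
      simp
    · rw [filter_insMap_row h12 T' hir1 hir2,
        Finset.card_image_of_injective _ (fMap_inj h12)]
      have hq : T'.filter (fun d => ePair r1 r2 d.2 = i) =
          T'.filter (fun d => d.2 = eInv r1 r2 i) := by
        apply Finset.filter_congr
        intro d _
        constructor
        · intro hdi
          have : ePair r1 r2 (eInv r1 r2 i) = i := ePair_eInv h12 hir1 hir2
          exact ePair_inj h12 (by rw [hdi, this])
        · intro hdi
          rw [hdi]
          exact ePair_eInv h12 hir1 hir2
      rw [hq]
      apply hrow
      · unfold eInv; split_ifs <;> omega
      · unfold eInv; split_ifs <;> omega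
  · intro j hj1 hj2
    by_cases hjn : j = m + 1
    · subst hjn
      rw [filter_insMap_col_self T' (fun d hd => by have := (hb d hd).2.1; omega)]
      rw [Finset.card_pair (by simp; omega)]
    · rw [filter_insMap_col T' hjn]
      have : T'.filter (fun d => (fMap r1 r2 d).1 = j) = T'.filter (fun d => d.1 = j) := rfl
      rw [Finset.card_image_of_injective _ (fMap_inj h12)]
      apply hcol j hj1
      omega
  · intro d hd
    rcases mem_insMap.1 hd with rfl | rfl | ⟨d', hd', rfl⟩
    · simpa using h1
    · simp; omega
    · have := hle d' hd'
      have := ePair_ge r1 r2 d'.2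
      simp [fMap]; omega

lemma ePair_pos {r1 r2 p : ℕ} (h1 : 1 ≤ r1) (h : 1 ≤ ePair r1 r2 p) : 1 ≤ p := by
  unfold ePair at h; split_ifs at h <;> omega

lemma ePair_le_bound {m r1 r2 p : ℕ} (h12 : r1 < r2) (h2 : r2 ≤ 2 * (m + 1))
    (h : ePair r1 r2 p ≤ 2 * (m + 1)) : p ≤ 2 * m := by
  unfold ePair at h; split_ifs at h <;> omega

lemma ePair_order {m r1 r2 a p : ℕ} (h1 : m + 1 ≤ r1) (ha : a ≤ m)
    (h : a ≤ ePair r1 r2 p) : a ≤ p := by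
  unfold ePair at h; split_ifs at h <;> omega

lemma insMap_mem_rev {m r1 r2 : ℕ} (h1 : m + 1 ≤ r1) (h12 : r1 < r2) (h2 : r2 ≤ 2 * (m + 1))
    {T' : Finset (ℕ × ℕ)} (hT : IsTab (m + 1) (insMap (m + 1) r1 r2 T')) : IsTab m T' := by
  obtain ⟨hb, hrow, hcol, hle⟩ := hT
  have hmem : ∀ d ∈ T', fMap r1 r2 d ∈ insMap (m + 1) r1 r2 T' := by
    intro d hd
    exact mem_insMap.2 (Or.inr (Or.inr ⟨d, hd, rfl⟩))
  have hbT' : ∀ d ∈ T', 1 ≤ d.1 ∧ d.1 ≤ m ∧ 1 ≤ d.2 ∧ d.2 ≤ 2 * m := by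
    intro d hd
    obtain ⟨b1, b2, b3, b4⟩ := hb _ (hmem d hd)
    simp only [fMap] at b1 b2 b3 b4
    have e1 := (ePair_ne h12 d.2).1
    have e2 := (ePair_ne h12 d.2).2
    have hd1 : d.1 ≤ m := by
      by_contra hcon
      have hd1' : d.1 = m + 1 := by omega
      have hsub : ({(m + 1, r1), (m + 1, r2), fMap r1 r2 d} : Finset (ℕ × ℕ)) ⊆
          (insMap (m + 1) r1 r2 T').filter (fun d => d.1 = m + 1) := by
        intro x hx
        simp only [Finset.mem_insert, Finset.mem_singleton] at hx
        rcases hx with rfl | rfl | rfl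
        · exact Finset.mem_filter.2 ⟨mem_insMap.2 (Or.inl rfl), rfl⟩
        · exact Finset.mem_filter.2 ⟨mem_insMap.2 (Or.inr (Or.inl rfl)), rfl⟩
        · exact Finset.mem_filter.2 ⟨hmem d hd, hd1'⟩
      have hcard := Finset.card_le_card hsub
      rw [hcol (m + 1) (by omega) (by omega)] at hcard
      have hne1 : ((m + 1, r1) : ℕ × ℕ) ∉ ({(m + 1, r2), fMap r1 r2 d} : Finset (ℕ × ℕ)) := by
        simp only [Finset.mem_insert, Finset.mem_singleton, fMap, Prod.ext_iff]
        push_neg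
        exact ⟨fun _ => by omega, fun _ => by omega⟩
      have hne2 : ((m + 1, r2) : ℕ × ℕ) ∉ ({fMap r1 r2 d} : Finset (ℕ × ℕ)) := by
        simp only [Finset.mem_singleton, fMap, Prod.ext_iff]
        push_neg
        exact fun _ => by omega
      rw [Finset.card_insert_of_notMem hne1, Finset.card_insert_of_notMem hne2,
        Finset.card_singleton] at hcard
      omega
    exact ⟨b1, hd1, ePair_pos (by omega) b3, ePair_le_bound h12 h2 b4⟩
  refine ⟨hbT', ?_, ?_, ?_⟩
  · intro i hi1 hi2
    have hge := ePair_ge r1 r2 i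
    have hle2 := ePair_le r1 r2 i
    have key := filter_insMap_row (n := m + 1) h12 T' (ePair_ne h12 i).1 (ePair_ne h12 i).2
    have hfe : T'.filter (fun d => ePair r1 r2 d.2 = ePair r1 r2 i) =
        T'.filter (fun d => d.2 = i) := by
      apply Finset.filter_congr
      intro d _
      exact ⟨fun h => ePair_inj h12 h, fun h => by rw [h]⟩
    rw [hfe] at key
    have := hrow (ePair r1 r2 i) (by omega) (by omega)
    rw [key, Finset.card_image_of_injective _ (fMap_inj h12)] at this
    exact this
  · intro j hj1 hj2
    have key := filter_insMap_col (n := m + 1) (r1 := r1) (r2 := r2) T' (j := j) (by omega)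
    have := hcol j hj1 (by omega)
    rw [key, Finset.card_image_of_injective _ (fMap_inj h12)] at this
    exact this
  · intro d hd
    have := hle _ (hmem d hd)
    simp only [fMap] at this
    exact ePair_order h1 (hbT' d hd).2.1 this

lemma insMap_injOn {m a1 a2 b1 b2 : ℕ} {TA TB : Finset (ℕ × ℕ)}
    (ha12 : a1 < a2) (hb12 : b1 < b2)
    (hTA : ∀ d ∈ TA, d.1 ≤ m) (hTB : ∀ d ∈ TB, d.1 ≤ m)
    (h : insMap (m + 1) a1 a2 TA = insMap (m + 1) b1 b2 TB) :
    a1 = b1 ∧ a2 = b2 ∧ TA = TB := by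
  have key : ∀ (c1 c2 : ℕ) (S : Finset (ℕ × ℕ)), (∀ d ∈ S, d.1 ≤ m) →
      ∀ x, (m + 1, x) ∈ insMap (m + 1) c1 c2 S → x = c1 ∨ x = c2 := by
    intro c1 c2 S hS x hx
    rcases mem_insMap.1 hx with h' | h' | ⟨d', hd', h'⟩
    · exact Or.inl (congrArg Prod.snd h')
    · exact Or.inr (congrArg Prod.snd h')
    · have h1 := congrArg Prod.fst h'
      have := hS d' hd'
      simp [fMap] at h1
      omega
  have k1 := key b1 b2 TB hTB a1 (h ▸ mem_insMap.2 (Or.inl rfl))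
  have k2 := key b1 b2 TB hTB a2 (h ▸ mem_insMap.2 (Or.inr (Or.inl rfl)))
  have k3 := key a1 a2 TA hTA b1 (h ▸ mem_insMap.2 (Or.inl rfl))
  have hab1 : a1 = b1 := by omega
  have hab2 : a2 = b2 := by omega
  subst hab1; subst hab2
  refine ⟨rfl, rfl, ?_⟩
  have hstep : ∀ (S S' : Finset (ℕ × ℕ)), (∀ d ∈ S, d.1 ≤ m) →
      insMap (m + 1) a1 a2 S = insMap (m + 1) a1 a2 S' →
      S.image (fMap a1 a2) ⊆ S'.image (fMap a1 a2) := by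
    intro S S' hS heq d hd
    have hdI : d ∈ insMap (m + 1) a1 a2 S' := by
      rw [← heq]
      exact Finset.mem_insert_of_mem (Finset.mem_insert_of_mem hd)
    rcases mem_insMap.1 hdI with rfl | rfl | ⟨d', hd', rfl⟩
    · obtain ⟨e, he, hfe⟩ := Finset.mem_image.1 hd
      have := hS e he
      have h1 := congrArg Prod.fst hfe
      simp [fMap] at h1
      omega
    · obtain ⟨e, he, hfe⟩ := Finset.mem_image.1 hd
      have := hS e he
      have h1 := congrArg Prod.fst hfe
      simp [fMap] at h1
      omega
    · exact Finset.mem_image.2 ⟨d', hd', rfl⟩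
  have himg : TA.image (fMap a1 a2) = TB.image (fMap a1 a2) :=
    Finset.Subset.antisymm (hstep TA TB hTA h) (hstep TB TA hTB h.symm)
  exact Finset.image_injective (fMap_inj ha12) himg

lemma row_unique {n : ℕ} {T : Finset (ℕ × ℕ)} (hT : IsTab n T) {d d' : ℕ × ℕ}
    (hd : d ∈ T) (hd' : d' ∈ T) (h : d.2 = d'.2) : d = d' := by
  obtain ⟨hb, hrow, _, _⟩ := hT
  obtain ⟨_, _, b3, b4⟩ := hb d hd
  have hcard := hrow d.2 b3 b4
  have h1 : d ∈ T.filter (fun x => x.2 = d.2) := Finset.mem_filter.2 ⟨hd, rfl⟩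
  have h2 : d' ∈ T.filter (fun x => x.2 = d.2) := Finset.mem_filter.2 ⟨hd', h.symm⟩
  exact Finset.card_le_one.1 (le_of_eq hcard) d h1 d' h2

lemma tab_surj {m : ℕ} {T : Finset (ℕ × ℕ)} (hT : IsTab (m + 1) T) :
    ∃ r1 r2 T', m + 1 ≤ r1 ∧ r1 < r2 ∧ r2 ≤ 2 * (m + 1) ∧ IsTab m T' ∧
      T = insMap (m + 1) r1 r2 T' := by
  have hcol := hT.2.2.1 (m + 1) (by omega) (by omega)
  obtain ⟨a, b, hab, hset⟩ := Finset.card_eq_two.1 hcol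
  have haf : a ∈ T.filter (fun d => d.1 = m + 1) := by rw [hset]; simp
  have hbf : b ∈ T.filter (fun d => d.1 = m + 1) := by rw [hset]; simp
  have haT := (Finset.mem_filter.1 haf).1
  have ha1 := (Finset.mem_filter.1 haf).2
  have hbT := (Finset.mem_filter.1 hbf).1
  have hb1 := (Finset.mem_filter.1 hbf).2
  have habne : a.2 ≠ b.2 := fun h => hab (row_unique hT haT hbT h)
  suffices key : ∀ r1 r2 : ℕ, r1 < r2 →
      T.filter (fun d => d.1 = m + 1) = {(m + 1, r1), (m + 1, r2)} →
      ∃ r1 r2 T', m + 1 ≤ r1 ∧ r1 < r2 ∧ r2 ≤ 2 * (m + 1) ∧ IsTab m T' ∧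
        T = insMap (m + 1) r1 r2 T' by
    have ha' : a = (m + 1, a.2) := Prod.ext ha1 rfl
    have hb' : b = (m + 1, b.2) := Prod.ext hb1 rfl
    rcases lt_or_gt_of_ne habne with hlt | hgt
    · exact key a.2 b.2 hlt (by rw [hset, ← ha', ← hb'])
    · exact key b.2 a.2 hgt (by rw [hset, ← ha', ← hb', Finset.pair_comm])
  intro r1 r2 h12 hfil
  have hr1T : (m + 1, r1) ∈ T := by
    have : (m + 1, r1) ∈ T.filter (fun d => d.1 = m + 1) := by rw [hfil]; simp
    exact (Finset.mem_filter.1 this).1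
  have hr2T : (m + 1, r2) ∈ T := by
    have : (m + 1, r2) ∈ T.filter (fun d => d.1 = m + 1) := by rw [hfil]; simp
    exact (Finset.mem_filter.1 this).1
  have h1 : m + 1 ≤ r1 := hT.2.2.2 _ hr1T
  have h2 : r2 ≤ 2 * (m + 1) := (hT.1 _ hr2T).2.2.2
  have hrowne : ∀ d ∈ T, d.1 ≠ m + 1 → d.2 ≠ r1 ∧ d.2 ≠ r2 := by
    intro d hd hdne
    constructor
    · intro h
      have := row_unique hT hd hr1T h
      exact hdne (congrArg Prod.fst this)
    · intro h
      have := row_unique hT hd hr2T h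
      exact hdne (congrArg Prod.fst this)
  set S := T.filter (fun d => ¬ d.1 = m + 1) with hS
  have heq : T = insMap (m + 1) r1 r2 (S.image (fun d => (d.1, eInv r1 r2 d.2))) := by
    unfold insMap
    rw [Finset.image_image]
    have himg : S.image ((fMap r1 r2) ∘ (fun d => (d.1, eInv r1 r2 d.2))) = S := by
      have heqon : ∀ d ∈ S, ((fMap r1 r2) ∘ (fun d => (d.1, eInv r1 r2 d.2))) d = id d := by
        intro d hd
        have hd' := Finset.mem_filter.1 hd
        have hne := hrowne d hd'.1 hd'.2
        simp only [Function.comp, fMap, id]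
        exact Prod.ext rfl (ePair_eInv h12 hne.1 hne.2)
      rw [Finset.image_congr heqon, Finset.image_id]
    rw [himg]
    ext d
    simp only [Finset.mem_insert, hS, Finset.mem_filter]
    constructor
    · intro hd
      by_cases hdc : d.1 = m + 1
      · have : d ∈ T.filter (fun d => d.1 = m + 1) := Finset.mem_filter.2 ⟨hd, hdc⟩
        rw [hfil] at this
        simp only [Finset.mem_insert, Finset.mem_singleton] at this
        tauto
      · exact Or.inr (Or.inr ⟨hd, hdc⟩)
    · rintro (rfl | rfl | ⟨hd, _⟩)
      · exact hr1T
      · exact hr2T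
      · exact hd
  exact ⟨r1, r2, S.image (fun d => (d.1, eInv r1 r2 d.2)), h1, h12, h2,
    insMap_mem_rev h1 h12 h2 (heq ▸ hT), heq⟩

def pairF (m : ℕ) : Finset (ℕ × ℕ) :=
  (Finset.range (m + 2)).biUnion
    (fun k => (Finset.Ico (m + 1) (m + 1 + k)).image (fun a => (a, m + 1 + k)))

lemma mem_pairF {m : ℕ} {r : ℕ × ℕ} :
    r ∈ pairF m ↔ m + 1 ≤ r.1 ∧ r.1 < r.2 ∧ r.2 ≤ 2 * (m + 1) := by
  rcases r with ⟨x, y⟩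
  simp only [pairF, Finset.mem_biUnion, Finset.mem_image, Finset.mem_Ico, Finset.mem_range,
    Prod.mk.injEq]
  constructor
  · rintro ⟨k, hk, a, ⟨ha1, ha2⟩, rfl, rfl⟩
    omega
  · rintro ⟨h1, h2, h3⟩
    exact ⟨y - (m + 1), by omega, x, ⟨by omega, by omega⟩, rfl, by omega⟩

lemma card_pairF (m : ℕ) : (pairF m).card * 2 = (m + 2) * (m + 1) := by
  have hdisj : ∀ x ∈ Finset.range (m + 2), ∀ y ∈ Finset.range (m + 2), x ≠ y →
      Disjoint ((Finset.Ico (m + 1) (m + 1 + x)).image (fun a => (a, m + 1 + x)))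
        ((Finset.Ico (m + 1) (m + 1 + y)).image (fun a => (a, m + 1 + y))) := by
    intro x _ y _ hxy
    rw [Finset.disjoint_left]
    rintro d hd1 hd2
    obtain ⟨a, _, rfl⟩ := Finset.mem_image.1 hd1
    obtain ⟨b, _, hb⟩ := Finset.mem_image.1 hd2
    have := congrArg Prod.snd hb
    simp at this
    omega
  rw [pairF, Finset.card_biUnion hdisj]
  have hcards : ∀ k ∈ Finset.range (m + 2),
      ((Finset.Ico (m + 1) (m + 1 + k)).image (fun a => (a, m + 1 + k))).card = k := by
    intro k _
    rw [Finset.card_image_of_injective _ (fun a b h => (Prod.ext_iff.1 h).1), Nat.card_Ico]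
    omega
  rw [Finset.sum_congr rfl hcards]
  have := Finset.sum_range_id_mul_two (m + 2)
  simpa using this

lemma tab_zero : Tab 0 = {∅} := by
  ext T
  simp only [Tab, Set.mem_setOf_eq, Set.mem_singleton_iff, IsTab]
  constructor
  · intro h
    apply Finset.eq_empty_iff_forall_notMem.2
    intro d hd
    have := h.1 d hd
    omega
  · rintro rfl
    refine ⟨by simp, by intro i h1 h2; omega, by intro j h1 h2; omega, by simp⟩

lemma tab_aux : ∀ m : ℕ, (Tab m).Finite ∧
    2 ^ m * (Tab m).ncard = Nat.factorial (m + 1) * Nat.factorial m := by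
  intro m
  induction m with
  | zero =>
    rw [tab_zero]
    exact ⟨Set.finite_singleton _, by simp⟩
  | succ m ih =>
    obtain ⟨hfin, hcard⟩ := ih
    set Q := hfin.toFinset with hQ
    have hQcoe : (↑Q : Set (Finset (ℕ × ℕ))) = Tab m := hfin.coe_toFinset
    have hQmem : ∀ T', T' ∈ Q ↔ IsTab m T' := by
      intro T'
      rw [hQ, Set.Finite.mem_toFinset]
      rfl
    have himage : Tab (m + 1) =
        (fun x : (ℕ × ℕ) × Finset (ℕ × ℕ) => insMap (m + 1) x.1.1 x.1.2 x.2) ''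
          ↑(pairF m ×ˢ Q) := by
      ext T
      constructor
      · intro hT
        obtain ⟨r1, r2, T', h1, h12, h2, hT', heq⟩ := tab_surj hT
        refine ⟨((r1, r2), T'), ?_, heq.symm⟩
        rw [Finset.mem_coe, Finset.mem_product]
        exact ⟨mem_pairF.2 ⟨h1, h12, h2⟩, (hQmem T').2 hT'⟩
      · rintro ⟨⟨⟨r1, r2⟩, T'⟩, hmem, rfl⟩
        rw [Finset.mem_coe, Finset.mem_product] at hmem
        obtain ⟨hp, hq⟩ := hmem
        obtain ⟨h1, h12, h2⟩ := mem_pairF.1 hp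
        exact insMap_mem h1 h12 h2 ((hQmem T').1 hq)
    have hinj : Set.InjOn (fun x : (ℕ × ℕ) × Finset (ℕ × ℕ) => insMap (m + 1) x.1.1 x.1.2 x.2)
        ↑(pairF m ×ˢ Q) := by
      rintro ⟨⟨a1, a2⟩, TA⟩ hx ⟨⟨b1, b2⟩, TB⟩ hy h
      rw [Finset.mem_coe, Finset.mem_product] at hx hy
      obtain ⟨ha1, ha12, ha2⟩ := mem_pairF.1 hx.1
      obtain ⟨hb1, hb12, hb2⟩ := mem_pairF.1 hy.1
      have hTA : ∀ d ∈ TA, d.1 ≤ m := fun d hd => (((hQmem TA).1 hx.2).1 d hd).2.1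
      have hTB : ∀ d ∈ TB, d.1 ≤ m := fun d hd => (((hQmem TB).1 hy.2).1 d hd).2.1
      obtain ⟨e1, e2, e3⟩ := insMap_injOn ha12 hb12 hTA hTB h
      subst e1; subst e2; subst e3
      rfl
    constructor
    · rw [himage]
      exact ((pairF m ×ˢ Q).finite_toSet).image _
    · rw [himage, Set.ncard_image_of_injOn hinj, Set.ncard_coe_finset, Finset.card_product]
      have hq' : 2 ^ m * Q.card = Nat.factorial (m + 1) * Nat.factorial m := by
        rw [← hcard, ← hQcoe, Set.ncard_coe_finset]
      calc 2 ^ (m + 1) * ((pairF m).card * Q.card)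
          = ((pairF m).card * 2) * (2 ^ m * Q.card) := by ring
        _ = ((m + 2) * (m + 1)) * (Nat.factorial (m + 1) * Nat.factorial m) := by
            rw [card_pairF, hq']
        _ = Nat.factorial (m + 1 + 1) * Nat.factorial (m + 1) := by
            rw [Nat.factorial_succ (m + 1), Nat.factorial_succ m]
            ring

/-- For every `n ≥ 1`, `#Tab_n = (n+1)! · n! / 2^n`, i.e. `2^n · #Tab_n = (n+1)! · n!`. -/
theorem tab_card (n : ℕ) (hn : 1 ≤ n) :
    2 ^ n * (Tab n).ncard = Nat.factorial (n + 1) * Nat.factorial n :=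
  (tab_aux n).2
end

section
/- Let n ≥ 1, j ∈ {1,…,n}, T a j-tableau, and i ∈ {j,…,2n} an index such that the first j−1 boxes of the row R_i of T are empty. Then the T-path (i_0, i_1, i_2, …) from the box C_j ∩ R_i is eventually stationary, and its eventual value (its arrival) lies in {j,…,n} ∪ {n+j,…,2n}. Moreover, the map π_j^T sending each such index i to the arrival of the T-path from the box C_j ∩ R_i is a bijection from the set {i ∈ {j,…,2n} : the boxes of row R_i in columns C_1,…,C_{j−1} are empty} onto {j,…,n} ∪ {n+j,…,2n}. -/
/-- The physical height of the row named `R_i` (for `1 ≤ i ≤ 2n`): from bottom to top the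
rows are `R_1, …, R_n, R_{2n-1}, R_{2n-2}, …, R_{n+1}, R_{2n}`, so `h(i) = i` for
`1 ≤ i ≤ n`, `h(i) = 3n - i` for `n + 1 ≤ i ≤ 2n - 1`, and `h(2n) = 2n`. -/
def hgt (n i : ℕ) : ℕ :=
  if i ≤ n then i else if i = 2 * n then 2 * n else 3 * n - i

/-- A `j`-tableau with `n` columns and `2n` rows.  A dot is recorded as a pair
`(c, i)`: a dot in column `C_c` lying in the row named `R_i`.  Every dot satisfies
`c ≤ hgt n i` (it lies above the diagonal, `hgt n i` being the physical height of its row);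
columns `C_1, …, C_{j-1}` contain exactly two dots and every column at most two;
rows `R_1, …, R_{j-1}` contain exactly one dot and every row at most one. -/
def IsJTableau (n j : ℕ) (T : Finset (ℕ × ℕ)) : Prop :=
  (∀ d ∈ T, 1 ≤ d.1 ∧ d.1 ≤ n ∧ 1 ≤ d.2 ∧ d.2 ≤ 2 * n ∧ d.1 ≤ hgt n d.2) ∧
  (∀ c, 1 ≤ c → c < j → (T.filter (fun d => d.1 = c)).card = 2) ∧
  (∀ c, (T.filter (fun d => d.1 = c)).card ≤ 2) ∧
  (∀ i, 1 ≤ i → i < j → (T.filter (fun d => d.2 = i)).card = 1) ∧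
  (∀ i, (T.filter (fun d => d.2 = i)).card ≤ 1)

/-- `r` names the row of the upper dot of column `C_c` of `T` (the dot of `C_c` whose
row has maximal physical height). -/
def IsUpperDotRow (n : ℕ) (T : Finset (ℕ × ℕ)) (c r : ℕ) : Prop :=
  (c, r) ∈ T ∧ ∀ r', (c, r') ∈ T → hgt n r' ≤ hgt n r

/-- `r` names the row of the lower dot of column `C_c` of `T`. -/
def IsLowerDotRow (n : ℕ) (T : Finset (ℕ × ℕ)) (c r : ℕ) : Prop :=
  (c, r) ∈ T ∧ ∀ r', (c, r') ∈ T → hgt n r ≤ hgt n r'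

/-- The arrival set `{j, …, n} ∪ {n + j, …, 2n}`. -/
def Arrival (n j a : ℕ) : Prop := (j ≤ a ∧ a ≤ n) ∨ (n + j ≤ a ∧ a ≤ 2 * n)

/-- One step of a `T`-path: (1) if `a ∈ {j, …, n} ∪ {n + j, …, 2n}` then `b = a`;
(2) if `a = n + j_k` with `j_k ∈ {1, …, j-1}` then `b` names the row of the upper dot
of column `C_{j_k}`; (3) if `a ∈ {1, …, j-1}` then `b` names the row of the lower dot
of column `C_a`. -/
def PathStep (n j : ℕ) (T : Finset (ℕ × ℕ)) (a b : ℕ) : Prop :=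
  (Arrival n j a ∧ b = a) ∨
  ((n + 1 ≤ a ∧ a < n + j) ∧ IsUpperDotRow n T (a - n) b) ∨
  ((1 ≤ a ∧ a < j) ∧ IsLowerDotRow n T a b)

/-- The domain of `π_j^T`: indices `i ∈ {j, …, 2n}` such that the boxes of row `R_i` in
columns `C_1, …, C_{j-1}` are empty. -/
def PiDomain (n j : ℕ) (T : Finset (ℕ × ℕ)) : Set ℕ :=
  {i | j ≤ i ∧ i ≤ 2 * n ∧ ∀ c, 1 ≤ c → c < j → (c, i) ∉ T}

/-!
A `T`-path is an orbit of the step map `tpathStep`, which fixes the arrival rows and maps the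
transit rows `{1, …, j-1} ∪ {n+1, …, n+j-1}` injectively onto the rows of the dots of
`C_1, …, C_{j-1}`: each row holds at most one dot, and the lower and upper dots of a column
lie in different rows. The domain of `π` is exactly the part of `{1, …, 2n}` outside this image.
An orbit of an injective map that starts outside its image never repeats a point, so it
leaves the transit rows within `#transit` steps; running two orbits with a common arrival
backwards shows that they start at the same point. Domain and arrival set both have
`2n - #transit` elements, so the injective arrival map is also onto.
-/

section Orbit

variable {α : Type*} {f : α → α}

theorem Relator.RightUnique.eq_iterate {R : α → α → Prop} (hR : Relator.RightUnique R)
    {s : ℕ → α} (hf : ∀ k, R (f^[k] (s 0)) (f^[k + 1] (s 0))) (hs : ∀ k, R (s k) (s (k + 1))) :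
    ∀ k, s k = f^[k] (s 0)
  | 0 => rfl
  | k + 1 => hR (hs k) (hR.eq_iterate hf hs k ▸ hf k)

variable {S : Set α}

theorem Set.InjOn.eq_of_iterate_eq (hinj : S.InjOn f) {x y : α} :
    ∀ {k : ℕ}, (∀ i < k, f^[i] x ∈ S) → (∀ i < k, f^[i] y ∈ S) → f^[k] x = f^[k] y → x = y
  | 0, _, _, h => h
  | k + 1, hx, hy, h => by
    rw [Function.iterate_succ_apply', Function.iterate_succ_apply'] at h
    exact hinj.eq_of_iterate_eq (fun i hi => hx i (by omega)) (fun i hi => hy i (by omega))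
      (hinj (hx k k.lt_succ_self) (hy k k.lt_succ_self) h)

theorem Set.InjOn.eq_of_iterate_eq_iterate_of_le (hinj : S.InjOn f) {x y : α} {k l : ℕ}
    (hx : x ∉ f '' S) (hxS : ∀ i < k, f^[i] x ∈ S) (hyS : ∀ i < l, f^[i] y ∈ S) (hkl : k ≤ l)
    (h : f^[k] x = f^[l] y) : x = y ∧ k = l := by
  obtain ⟨d, rfl⟩ := Nat.exists_eq_add_of_le hkl
  rw [Function.iterate_add_apply] at h
  have hxy : x = f^[d] y := hinj.eq_of_iterate_eq hxS
    (fun i hi => by rw [← Function.iterate_add_apply]; exact hyS _ (by omega)) h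
  cases d with
  | zero => exact ⟨hxy, rfl⟩
  | succ d => exact absurd ⟨_, hyS d (by omega), by rw [hxy, Function.iterate_succ_apply']⟩ hx

variable {S A : Finset α} {x : α}

theorem Set.InjOn.le_card_of_forall_iterate_mem (hinj : Set.InjOn f S) (hx : x ∉ f '' S)
    {m : ℕ} (hm : ∀ i < m, f^[i] x ∈ S) : m ≤ S.card := by
  have hmaps : Set.MapsTo (fun i => f^[i] x) ↑(Finset.range m) ↑S :=
    fun i hi => hm i (Finset.mem_range.mp hi)
  refine Finset.card_range m ▸ Finset.card_le_card_of_injOn _ hmaps fun k hk l hl hkl => ?_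
  have hk := Finset.mem_range.mp hk
  have hl := Finset.mem_range.mp hl
  rcases le_total k l with hle | hle
  · exact (hinj.eq_of_iterate_eq_iterate_of_le hx (fun i _ => hm i (by omega))
      (fun i _ => hm i (by omega)) hle hkl).2
  · exact ((hinj.eq_of_iterate_eq_iterate_of_le hx (fun i _ => hm i (by omega))
      (fun i _ => hm i (by omega)) hle hkl.symm).2).symm

theorem Function.IsFixedPt.iterate_eq_of_le {m k : ℕ} (h : Function.IsFixedPt f (f^[m] x))
    (hmk : m ≤ k) : f^[k] x = f^[m] x := by
  obtain ⟨d, rfl⟩ := Nat.exists_eq_add_of_le hmk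
  rw [add_comm, Function.iterate_add_apply]
  exact h.iterate d

variable [DecidableEq α]

theorem exists_first_arrival (hmaps : Set.MapsTo f ↑(S ∪ A) ↑(S ∪ A)) (hinj : Set.InjOn f S)
    (hx : x ∈ (S ∪ A) \ S.image f) : ∃ m ≤ S.card, f^[m] x ∈ A ∧ ∀ i < m, f^[i] x ∈ S := by
  obtain ⟨hxU, hxS⟩ := Finset.mem_sdiff.mp hx
  rw [← Finset.mem_coe, Finset.coe_image] at hxS
  have hmem : ∀ i, f^[i] x ∉ A → f^[i] x ∈ S := fun i hA =>
    (Finset.mem_union.mp (hmaps.iterate i hxU)).resolve_right hA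
  have hex : ∃ m, f^[m] x ∈ A := by
    by_contra! hnot
    have := hinj.le_card_of_forall_iterate_mem hxS (m := S.card + 1) fun i _ => hmem i (hnot i)
    omega
  have hfirst : ∀ i < Nat.find hex, f^[i] x ∈ S := fun i hi => hmem i (Nat.find_min hex hi)
  exact ⟨Nat.find hex, hinj.le_card_of_forall_iterate_mem hxS hfirst, Nat.find_spec hex, hfirst⟩

theorem iterate_eq_iterate_card_of_le (hmaps : Set.MapsTo f ↑(S ∪ A) ↑(S ∪ A))
    (hinj : Set.InjOn f S) (hfix : ∀ a ∈ A, Function.IsFixedPt f a)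
    (hx : x ∈ (S ∪ A) \ S.image f) {k : ℕ} (hk : S.card ≤ k) : f^[k] x = f^[S.card] x := by
  obtain ⟨m, hm, hmA, -⟩ := exists_first_arrival hmaps hinj hx
  rw [(hfix _ hmA).iterate_eq_of_le (hm.trans hk), (hfix _ hmA).iterate_eq_of_le hm]

theorem bijOn_iterate_card (hSA : Disjoint S A) (hmaps : Set.MapsTo f ↑(S ∪ A) ↑(S ∪ A))
    (hinj : Set.InjOn f S) (hfix : ∀ a ∈ A, Function.IsFixedPt f a) :
    Set.BijOn f^[S.card] ↑((S ∪ A) \ S.image f) ↑A := by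
  have harrive : ∀ x ∈ (S ∪ A) \ S.image f,
      ∃ m, f^[m] x ∈ A ∧ (∀ i < m, f^[i] x ∈ S) ∧ f^[S.card] x = f^[m] x := by
    intro x hx
    obtain ⟨m, hm, hmA, hmS⟩ := exists_first_arrival hmaps hinj hx
    exact ⟨m, hmA, hmS, (hfix _ hmA).iterate_eq_of_le hm⟩
  have hmapsTo : Set.MapsTo f^[S.card] ↑((S ∪ A) \ S.image f) ↑A := fun x hx => by
    obtain ⟨m, hmA, -, hx⟩ := harrive x hx
    exact hx ▸ hmA
  have hinjOn : Set.InjOn f^[S.card] ↑((S ∪ A) \ S.image f) := by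
    have hnot : ∀ x ∈ (S ∪ A) \ S.image f, x ∉ f '' ↑S := fun x hx => by
      rw [← Finset.coe_image]; exact (Finset.mem_sdiff.mp hx).2
    intro x hx y hy hxy
    obtain ⟨mx, -, hxS, hxm⟩ := harrive x hx
    obtain ⟨my, -, hyS, hym⟩ := harrive y hy
    rw [hxm, hym] at hxy
    rcases le_total mx my with hle | hle
    · exact (hinj.eq_of_iterate_eq_iterate_of_le (hnot x hx) hxS hyS hle hxy).1
    · exact (hinj.eq_of_iterate_eq_iterate_of_le (hnot y hy) hyS hxS hle hxy.symm).1.symm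
  refine ⟨hmapsTo, hinjOn, Finset.surjOn_of_injOn_of_card_le _ hmapsTo hinjOn ?_⟩
  rw [Finset.card_sdiff_of_subset (Finset.image_subset_iff.mpr fun x hx => hmaps (by simp [hx])),
    Finset.card_union_of_disjoint hSA, Finset.card_image_of_injOn hinj]
  omega

end Orbit

def transitRows (n j : ℕ) : Finset ℕ := Finset.Ico 1 j ∪ Finset.Ico (n + 1) (n + j)

def arrivalRows (n j : ℕ) : Finset ℕ := Finset.Icc j n ∪ Finset.Icc (n + j) (2 * n)

theorem mem_arrivalRows {n j a : ℕ} : a ∈ arrivalRows n j ↔ Arrival n j a := by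
  simp [arrivalRows, Arrival]

theorem disjoint_transitRows_arrivalRows (n j : ℕ) :
    Disjoint (transitRows n j) (arrivalRows n j) := by
  rw [Finset.disjoint_left]
  simp only [transitRows, arrivalRows, Finset.mem_union, Finset.mem_Ico, Finset.mem_Icc]
  omega

theorem transitRows_union_arrivalRows {n j : ℕ} (hj1 : 1 ≤ j) (hjn : j ≤ n) :
    transitRows n j ∪ arrivalRows n j = Finset.Icc 1 (2 * n) := by
  ext a
  simp only [transitRows, arrivalRows, Finset.mem_union, Finset.mem_Ico, Finset.mem_Icc]
  omega

open Classical in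
noncomputable def tpathStep (n j : ℕ) (T : Finset (ℕ × ℕ)) (a : ℕ) : ℕ :=
  if h : ∃ b, PathStep n j T a b then h.choose else a

theorem hgt_injOn (n : ℕ) : Set.InjOn (hgt n) (Set.Icc 1 (2 * n)) := by
  intro a ha b hb h
  simp only [Set.mem_Icc] at ha hb
  unfold hgt at h
  split_ifs at h <;> omega

theorem exists_pair_of_card_filter_fst_eq_two {α β : Type*} [DecidableEq α] [DecidableEq β]
    {T : Finset (α × β)} {c : α} (hc : (T.filter (fun d => d.1 = c)).card = 2) :
    ∃ r₁ r₂ : β, r₁ ≠ r₂ ∧ ∀ r, (c, r) ∈ T ↔ r = r₁ ∨ r = r₂ := by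
  obtain ⟨⟨c₁, r₁⟩, ⟨c₂, r₂⟩, hne, hcol⟩ := Finset.card_eq_two.mp hc
  have hmem : ∀ d, d ∈ T ∧ d.1 = c ↔ d = (c₁, r₁) ∨ d = (c₂, r₂) := fun d => by
    simpa using Finset.ext_iff.mp hcol d
  have h₁ : c₁ = c := ((hmem _).mpr (Or.inl rfl)).2
  have h₂ : c₂ = c := ((hmem _).mpr (Or.inr rfl)).2
  rw [h₁, h₂] at hmem
  exact ⟨r₁, r₂, fun h => hne (by rw [h₁, h₂, h]), fun r => by simpa using hmem (c, r)⟩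

namespace IsJTableau

variable {n j : ℕ} {T : Finset (ℕ × ℕ)}

theorem row_mem_Icc (hT : IsJTableau n j T) {c r : ℕ} (h : (c, r) ∈ T) :
    r ∈ Set.Icc 1 (2 * n) :=
  ⟨(hT.1 _ h).2.2.1, (hT.1 _ h).2.2.2.1⟩

theorem eq_of_hgt_eq (hT : IsJTableau n j T) {c c' r r' : ℕ} (h : (c, r) ∈ T)
    (h' : (c', r') ∈ T) (hh : hgt n r = hgt n r') : r = r' :=
  hgt_injOn n (hT.row_mem_Icc h) (hT.row_mem_Icc h') hh

theorem col_eq_of_mem (hT : IsJTableau n j T) {c c' r : ℕ} (h : (c, r) ∈ T)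
    (h' : (c', r) ∈ T) : c = c' :=
  congrArg Prod.fst <|
    Finset.card_le_one.mp (hT.2.2.2.2 r) (c, r) (by simp [h]) (c', r) (by simp [h'])

theorem isUpperDotRow_unique (hT : IsJTableau n j T) {c r r' : ℕ} (h : IsUpperDotRow n T c r)
    (h' : IsUpperDotRow n T c r') : r = r' :=
  hT.eq_of_hgt_eq h.1 h'.1 (le_antisymm (h'.2 r h.1) (h.2 r' h'.1))

theorem isLowerDotRow_unique (hT : IsJTableau n j T) {c r r' : ℕ} (h : IsLowerDotRow n T c r)
    (h' : IsLowerDotRow n T c r') : r = r' :=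
  hT.eq_of_hgt_eq h.1 h'.1 (le_antisymm (h.2 r' h'.1) (h'.2 r h.1))

theorem exists_lower_upper (hT : IsJTableau n j T) {c : ℕ} (hc1 : 1 ≤ c) (hcj : c < j) :
    ∃ rl ru, IsLowerDotRow n T c rl ∧ IsUpperDotRow n T c ru ∧ rl ≠ ru ∧
      ∀ r, (c, r) ∈ T → r = rl ∨ r = ru := by
  obtain ⟨r₁, r₂, hne, hmem⟩ := exists_pair_of_card_filter_fst_eq_two (hT.2.1 c hc1 hcj)
  have hr₁ := (hmem r₁).mpr (Or.inl rfl)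
  have hr₂ := (hmem r₂).mpr (Or.inr rfl)
  wlog hlt : hgt n r₁ < hgt n r₂ generalizing r₁ r₂
  · have hgt_ne : hgt n r₂ ≠ hgt n r₁ := fun h => hne (hT.eq_of_hgt_eq hr₁ hr₂ h.symm)
    exact this r₂ r₁ hne.symm (fun r => (hmem r).trans or_comm) hr₂ hr₁
      (lt_of_le_of_ne (not_lt.mp hlt) hgt_ne)
  refine ⟨r₁, r₂, ⟨hr₁, fun r hr => ?_⟩, ⟨hr₂, fun r hr => ?_⟩, hne, fun r => (hmem r).mp⟩ <;>
    rcases (hmem r).mp hr with rfl | rfl <;> omega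

theorem lower_ne_upper (hT : IsJTableau n j T) {c r : ℕ} (hc1 : 1 ≤ c) (hcj : c < j)
    (hl : IsLowerDotRow n T c r) (hu : IsUpperDotRow n T c r) : False := by
  obtain ⟨rl, ru, hrl, hru, hne, -⟩ := hT.exists_lower_upper hc1 hcj
  exact hne ((hT.isLowerDotRow_unique hrl hl).trans (hT.isUpperDotRow_unique hu hru))

theorem pathStep_rightUnique (hT : IsJTableau n j T) (hjn : j ≤ n) :
    Relator.RightUnique (PathStep n j T) := by
  intro a b b' h h'
  rcases h with ⟨hA, rfl⟩ | ⟨ha, hu⟩ | ⟨ha, hl⟩ <;>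
    rcases h' with ⟨hA', rfl⟩ | ⟨ha', hu'⟩ | ⟨ha', hl'⟩ <;>
    first
    | rfl
    | exact hT.isUpperDotRow_unique hu hu'
    | exact hT.isLowerDotRow_unique hl hl'
    | omega
    | (simp only [Arrival] at *; omega)

theorem exists_pathStep (hT : IsJTableau n j T) {a : ℕ} (ha : a ∈ Set.Icc 1 (2 * n)) :
    ∃ b, PathStep n j T a b := by
  by_cases hA : Arrival n j a
  · exact ⟨a, Or.inl ⟨hA, rfl⟩⟩
  have ha := Set.mem_Icc.mp ha
  simp only [Arrival] at hA
  rcases (by omega : (1 ≤ a ∧ a < j) ∨ (n + 1 ≤ a ∧ a < n + j)) with hlow | hup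
  · obtain ⟨rl, -, hrl, -⟩ := hT.exists_lower_upper hlow.1 hlow.2
    exact ⟨rl, Or.inr (Or.inr ⟨hlow, hrl⟩)⟩
  · obtain ⟨-, ru, -, hru, -⟩ := hT.exists_lower_upper (c := a - n) (by omega) (by omega)
    exact ⟨ru, Or.inr (Or.inl ⟨hup, hru⟩)⟩

theorem tpathStep_eq (hT : IsJTableau n j T) (hjn : j ≤ n) {a b : ℕ} (h : PathStep n j T a b) :
    tpathStep n j T a = b := by
  have hex : ∃ b, PathStep n j T a b := ⟨b, h⟩
  rw [tpathStep, dif_pos hex]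
  exact hT.pathStep_rightUnique hjn hex.choose_spec h

theorem pathStep_tpathStep (hT : IsJTableau n j T) (hjn : j ≤ n) {a : ℕ}
    (ha : a ∈ Set.Icc 1 (2 * n)) : PathStep n j T a (tpathStep n j T a) := by
  obtain ⟨b, h⟩ := hT.exists_pathStep ha
  rwa [hT.tpathStep_eq hjn h]

theorem mapsTo_tpathStep (hT : IsJTableau n j T) (hjn : j ≤ n) :
    Set.MapsTo (tpathStep n j T) (Set.Icc 1 (2 * n)) (Set.Icc 1 (2 * n)) := by
  intro a ha
  rcases hT.pathStep_tpathStep hjn ha with ⟨-, h⟩ | ⟨-, hu⟩ | ⟨-, hl⟩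
  · rw [h]; exact ha
  · exact hT.row_mem_Icc hu.1
  · exact hT.row_mem_Icc hl.1

theorem isFixedPt_tpathStep (hT : IsJTableau n j T) (hjn : j ≤ n) {a : ℕ} (ha : Arrival n j a) :
    Function.IsFixedPt (tpathStep n j T) a :=
  hT.tpathStep_eq hjn (Or.inl ⟨ha, rfl⟩)

theorem injOn_tpathStep (hT : IsJTableau n j T) (hjn : j ≤ n) :
    Set.InjOn (tpathStep n j T) (transitRows n j) := by
  intro a ha a' ha' h
  simp only [Finset.mem_coe, transitRows, Finset.mem_union, Finset.mem_Ico] at ha ha'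
  have hU : ∀ {a}, (1 ≤ a ∧ a < j) ∨ (n + 1 ≤ a ∧ a < n + j) → a ∈ Set.Icc 1 (2 * n) :=
    fun ha => by simp only [Set.mem_Icc]; omega
  have hs := hT.pathStep_tpathStep hjn (hU ha)
  have hs' := h ▸ hT.pathStep_tpathStep hjn (hU ha')
  rcases hs with ⟨hA, -⟩ | ⟨hup, hu⟩ | ⟨hlow, hl⟩ <;>
    rcases hs' with ⟨hA', -⟩ | ⟨hup', hu'⟩ | ⟨hlow', hl'⟩
  any_goals (simp only [Arrival] at *; omega)
  · have := hT.col_eq_of_mem hu.1 hu'.1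
    omega
  · have hcol := hT.col_eq_of_mem hu.1 hl'.1
    exact (hT.lower_ne_upper hlow'.1 hlow'.2 hl' (hcol ▸ hu)).elim
  · have hcol := hT.col_eq_of_mem hl.1 hu'.1
    exact (hT.lower_ne_upper hlow.1 hlow.2 hl (hcol ▸ hu')).elim
  · exact hT.col_eq_of_mem hl.1 hl'.1

theorem mem_image_tpathStep_iff (hT : IsJTableau n j T) (hjn : j ≤ n) {r : ℕ} :
    r ∈ (transitRows n j).image (tpathStep n j T) ↔ ∃ c, 1 ≤ c ∧ c < j ∧ (c, r) ∈ T := by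
  simp only [Finset.mem_image, transitRows, Finset.mem_union, Finset.mem_Ico]
  constructor
  · rintro ⟨a, ha, rfl⟩
    rcases hT.pathStep_tpathStep hjn (a := a) (by simp only [Set.mem_Icc]; omega) with
      ⟨hA, -⟩ | ⟨hup, hu⟩ | ⟨hlow, hl⟩
    · simp only [Arrival] at hA; omega
    · exact ⟨a - n, by omega, by omega, hu.1⟩
    · exact ⟨a, hlow.1, hlow.2, hl.1⟩
  · rintro ⟨c, hc1, hcj, hcr⟩
    obtain ⟨rl, ru, hl, hu, -, hall⟩ := hT.exists_lower_upper hc1 hcj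
    rcases hall r hcr with rfl | rfl
    · exact ⟨c, by omega, hT.tpathStep_eq hjn (Or.inr (Or.inr ⟨⟨hc1, hcj⟩, hl⟩))⟩
    · refine ⟨n + c, by omega, hT.tpathStep_eq hjn (Or.inr (Or.inl ⟨by omega, ?_⟩))⟩
      rwa [Nat.add_sub_cancel_left]

theorem exists_dot_of_lt (hT : IsJTableau n j T) (hjn : j ≤ n) {i : ℕ} (hi1 : 1 ≤ i)
    (hij : i < j) : ∃ c, 1 ≤ c ∧ c < j ∧ (c, i) ∈ T := by
  obtain ⟨⟨c, r⟩, hrow⟩ := Finset.card_eq_one.mp (hT.2.2.2.1 i hi1 hij)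
  obtain ⟨hcr, rfl⟩ : (c, r) ∈ T ∧ r = i :=
    Finset.mem_filter.mp (hrow ▸ Finset.mem_singleton_self _)
  have hdot := hT.1 _ hcr
  have hhgt : hgt n r = r := if_pos (by omega)
  exact ⟨c, hdot.1, by simp only [hhgt] at hdot; omega, hcr⟩

theorem piDomain_eq (hT : IsJTableau n j T) (hj1 : 1 ≤ j) (hjn : j ≤ n) :
    PiDomain n j T = ↑(Finset.Icc 1 (2 * n) \ (transitRows n j).image (tpathStep n j T)) := by
  ext i
  simp only [PiDomain, Set.mem_ofPred_eq, Finset.coe_sdiff, Set.mem_sdiff, Finset.mem_coe,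
    Finset.mem_Icc, hT.mem_image_tpathStep_iff hjn, not_exists, not_and]
  constructor
  · rintro ⟨hji, hi2, hempty⟩
    exact ⟨⟨by omega, hi2⟩, hempty⟩
  · rintro ⟨⟨hi1, hi2⟩, hempty⟩
    refine ⟨not_lt.mp fun hij => ?_, hi2, hempty⟩
    obtain ⟨c, hc1, hcj, hc⟩ := hT.exists_dot_of_lt hjn hi1 hij
    exact hempty c hc1 hcj hc

end IsJTableau

theorem tpath_stationary_and_pi_bijective_general (n j : ℕ) (hj1 : 1 ≤ j)
    (hjn : j ≤ n) (T : Finset (ℕ × ℕ)) (hT : IsJTableau n j T) :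
    ∃ π : ℕ → ℕ,
      (∀ i ∈ PiDomain n j T,
        (∃ s : ℕ → ℕ, s 0 = i ∧ ∀ k, PathStep n j T (s k) (s (k + 1))) ∧
        (∀ s : ℕ → ℕ, s 0 = i → (∀ k, PathStep n j T (s k) (s (k + 1))) →
          ∃ N, ∀ k, N ≤ k → s k = π i) ∧
        Arrival n j (π i)) ∧
      Set.BijOn π (PiDomain n j T) {a | Arrival n j a} := by
  set S := transitRows n j
  set A := arrivalRows n j
  set F := tpathStep n j T
  have hU : (↑(S ∪ A) : Set ℕ) = Set.Icc 1 (2 * n) := by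
    rw [transitRows_union_arrivalRows hj1 hjn, Finset.coe_Icc]
  have hmaps : Set.MapsTo F ↑(S ∪ A) ↑(S ∪ A) := hU ▸ hT.mapsTo_tpathStep hjn
  have hinj : Set.InjOn F S := hT.injOn_tpathStep hjn
  have hfix : ∀ a ∈ A, Function.IsFixedPt F a :=
    fun a ha => hT.isFixedPt_tpathStep hjn (mem_arrivalRows.mp ha)
  have hD : PiDomain n j T = ↑((S ∪ A) \ S.image F) := by
    rw [hT.piDomain_eq hj1 hjn, transitRows_union_arrivalRows hj1 hjn]
  have hA : {a | Arrival n j a} = ↑A := by ext; simp [A, mem_arrivalRows]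
  have hbij := bijOn_iterate_card (disjoint_transitRows_arrivalRows n j) hmaps hinj hfix
  refine ⟨F^[S.card], fun i hi => ?_, hD ▸ hA ▸ hbij⟩
  have hi' : i ∈ (S ∪ A) \ S.image F := by rwa [← Finset.mem_coe, ← hD]
  have hiU : ∀ k, F^[k] i ∈ Set.Icc 1 (2 * n) :=
    fun k => hU ▸ hmaps.iterate k (Finset.mem_sdiff.mp hi').1
  have hpath : ∀ k, PathStep n j T (F^[k] i) (F^[k + 1] i) := fun k => by
    rw [Function.iterate_succ_apply']
    exact hT.pathStep_tpathStep hjn (hiU k)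
  refine ⟨⟨fun k => F^[k] i, rfl, hpath⟩, fun s hs0 hs => ⟨S.card, fun k hk => ?_⟩,
    mem_arrivalRows.mp (hbij.mapsTo hi')⟩
  rw [(hT.pathStep_rightUnique hjn).eq_iterate (hs0 ▸ hpath) hs k, hs0]
  exact iterate_eq_iterate_card_of_le hmaps hinj hfix hi' hk

/-- For `1 ≤ j ≤ n` and `T` a `j`-tableau: for each `i ∈ {j, …, 2n}` whose first `j - 1`
boxes of row `R_i` are empty, a `T`-path from the box `C_j ∩ R_i` exists, every such path
is eventually stationary with a common eventual value `π i` lying in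
`{j, …, n} ∪ {n + j, …, 2n}`, and the arrival map `π` is a bijection from the domain onto
`{j, …, n} ∪ {n + j, …, 2n}`. -/
theorem tpath_stationary_and_pi_bijective (n j : ℕ) (hn : 1 ≤ n) (hj1 : 1 ≤ j)
    (hjn : j ≤ n) (T : Finset (ℕ × ℕ)) (hT : IsJTableau n j T) :
    ∃ π : ℕ → ℕ,
      (∀ i ∈ PiDomain n j T,
        (∃ s : ℕ → ℕ, s 0 = i ∧ ∀ k, PathStep n j T (s k) (s (k + 1))) ∧
        (∀ s : ℕ → ℕ, s 0 = i → (∀ k, PathStep n j T (s k) (s (k + 1))) →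
          ∃ N, ∀ k, N ≤ k → s k = π i) ∧
        Arrival n j (π i)) ∧
      Set.BijOn π (PiDomain n j T) {a | Arrival n j a} :=
  tpath_stationary_and_pi_bijective_general n j hj1 hjn T hT
end
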